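/- arXiv:2407.19298 — 2 statements merged into one kernel-verified Lean document; each statement's English description precedes it below -/
import Mathlib

section
/- Let (A, h, δ) be an AsGDer triple and (M, h_M, δ_M) an AsGDer-module over (A, h, δ). On the semi-direct product algebra A ⋉ M = A ⊕ M with multiplication (a, m)·(b, n) = (ab, an + mb), the map h ⊕ h_M is a derivation and the map δ ⊕ δ_M is a generalized (h ⊕ h_M)-derivation; hence (A ⋉ M, h ⊕ h_M, δ ⊕ δ_M) is an AsGDer triple. -/
/-!
`A ⋉ M` is the trivial square-zero extension `TrivSqZeroExt A M`, whose multiplication is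
associative. A derivation is a generalized derivation with `δ = h`, `δM = hM`, so both Leibniz
rules are one componentwise computation.
-/

open MulOpposite

namespace TrivSqZeroExt

variable {R M : Type*}

def prodMap (f : R → R) (g : M → M) : TrivSqZeroExt R M → TrivSqZeroExt R M :=
  Prod.map f g

@[simp]
theorem fst_prodMap (f : R → R) (g : M → M) (x : TrivSqZeroExt R M) :
    (prodMap f g x).fst = f x.fst :=
  rfl

@[simp]
theorem snd_prodMap (f : R → R) (g : M → M) (x : TrivSqZeroExt R M) :
    (prodMap f g x).snd = g x.snd :=
  rfl

theorem prodMap_mul {F : Type*} [Mul R] [Add R] [AddCommMonoid M] [SMul R M] [SMul Rᵐᵒᵖ M]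
    [FunLike F M M] [AddHomClass F M M] (h δ : R → R) (hM : M → M) (δM : F)
    (hδ : ∀ a b : R, δ (a * b) = δ a * b + a * h b)
    (hδM_left : ∀ (a : R) (m : M), δM (a • m) = δ a • m + a • hM m)
    (hδM_right : ∀ (a : R) (m : M), δM (op a • m) = op a • δM m + op (h a) • m)
    (x y : TrivSqZeroExt R M) :
    prodMap δ δM (x * y) = prodMap δ δM x * y + x * prodMap h hM y := by
  ext
  · simp only [fst_prodMap, fst_mul, fst_add, hδ]
  · simp only [snd_prodMap, snd_mul, snd_add, fst_prodMap, map_add, hδM_left, hδM_right]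
    abel

end TrivSqZeroExt

theorem semidirect_product_AsGDer_triple_general
    {k A M : Type*} [Field k] [Ring A] [Algebra k A]
    [AddCommGroup M] [Module k M] [Module A M] [Module Aᵐᵒᵖ M]
    [SMulCommClass A Aᵐᵒᵖ M]
    (h δ : A →ₗ[k] A) (hM δM : M →ₗ[k] M)
    (hder : ∀ a b : A, h (a * b) = h a * b + a * h b)
    (hgen : ∀ a b : A, δ (a * b) = δ a * b + a * h b)
    (hM1 : ∀ (a : A) (m : M), hM (a • m) = h a • m + a • hM m)
    (hM2 : ∀ (a : A) (m : M), hM (op a • m) = op a • hM m + op (h a) • m)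
    (dM1 : ∀ (a : A) (m : M), δM (a • m) = δ a • m + a • hM m)
    (dM2 : ∀ (a : A) (m : M), δM (op a • m) = op a • δM m + op (h a) • m) :
    let mul : A × M → A × M → A × M := fun p q => (p.1 * q.1, p.1 • q.2 + op q.1 • p.2)
    let H : A × M → A × M := fun p => (h p.1, hM p.2)
    let D : A × M → A × M := fun p => (δ p.1, δM p.2)
    (∀ p q r : A × M, mul (mul p q) r = mul p (mul q r)) ∧
    (∀ p q : A × M, H (mul p q) = mul (H p) q + mul p (H q)) ∧
    (∀ p q : A × M, D (mul p q) = mul (D p) q + mul p (H q)) :=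
  ⟨fun p q r => mul_assoc (G := TrivSqZeroExt A M) p q r,
    fun p q => TrivSqZeroExt.prodMap_mul (R := A) (M := M) h h hM hM hder hM1 hM2 p q,
    fun p q => TrivSqZeroExt.prodMap_mul (R := A) (M := M) h δ hM δM hgen dM1 dM2 p q⟩

/-- Let `(A, h, δ)` be an AsGDer triple and `(M, h_M, δ_M)` an
AsGDer-module over it (`M` an `A`-bimodule, right action written via `Aᵐᵒᵖ`).  On the
semi-direct product `A ⋉ M = A × M` with multiplication
`(a, m)·(b, n) = (ab, a•n + m•b)`, the map `h ⊕ h_M` is a derivation and `δ ⊕ δ_M` is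
a generalized `(h ⊕ h_M)`-derivation; hence `(A ⋉ M, h ⊕ h_M, δ ⊕ δ_M)` is an AsGDer
triple. -/
theorem semidirect_product_AsGDer_triple
    {k A M : Type*} [Field k] [CharZero k] [Ring A] [Algebra k A]
    [AddCommGroup M] [Module k M] [Module A M] [Module Aᵐᵒᵖ M]
    [SMulCommClass A Aᵐᵒᵖ M] [IsScalarTower k A M] [IsScalarTower k Aᵐᵒᵖ M]
    (h δ : A →ₗ[k] A) (hM δM : M →ₗ[k] M)
    (hder : ∀ a b : A, h (a * b) = h a * b + a * h b)
    (hgen : ∀ a b : A, δ (a * b) = δ a * b + a * h b)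
    (hM1 : ∀ (a : A) (m : M), hM (a • m) = h a • m + a • hM m)
    (hM2 : ∀ (a : A) (m : M), hM (op a • m) = op a • hM m + op (h a) • m)
    (dM1 : ∀ (a : A) (m : M), δM (a • m) = δ a • m + a • hM m)
    (dM2 : ∀ (a : A) (m : M), δM (op a • m) = op a • δM m + op (h a) • m) :
    let mul : A × M → A × M → A × M := fun p q => (p.1 * q.1, p.1 • q.2 + op q.1 • p.2)
    let H : A × M → A × M := fun p => (h p.1, hM p.2)
    let D : A × M → A × M := fun p => (δ p.1, δM p.2)
    (∀ p q r : A × M, mul (mul p q) r = mul p (mul q r)) ∧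
    (∀ p q : A × M, H (mul p q) = mul (H p) q + mul p (H q)) ∧
    (∀ p q : A × M, D (mul p q) = mul (D p) q + mul p (H q)) :=
  semidirect_product_AsGDer_triple_general h δ hM δM hder hgen hM1 hM2 dM1 dM2
end

section
/- Let (A, h) be an AssDer pair and (M, h_M) a module over (A, h). The map Δ : Hom(A^{⊗n}, M) → Hom(A^{⊗n}, M), Δ(f) = Σ_{i=1}^{n} f ∘ (id^{⊗(i−1)} ⊗ h ⊗ id^{⊗(n−i)}) − h_M ∘ f, is a chain map on the Hochschild cochain complex of A with coefficients in M, i.e., d_Hoch ∘ Δ = Δ ∘ d_Hoch. -/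
open Finset

namespace Stmt10

variable {k A M B : Type*}

/-- Partial composition `f ∘ᵢ μ` (0-based slot `i`). -/
def insMul (mul : A → A → A) {N : ℕ} (f : (Fin (N + 1) → A) → M) (i : Fin (N + 1))
    (v : Fin (N + 2) → A) : M :=
  f fun j =>
    if (j : ℕ) < (i : ℕ) then v ⟨j, Nat.lt_succ_of_lt j.isLt⟩
    else if (j : ℕ) = (i : ℕ) then
      mul (v ⟨j, Nat.lt_succ_of_lt j.isLt⟩) (v ⟨(j : ℕ) + 1, Nat.succ_lt_succ j.isLt⟩)
    else v ⟨(j : ℕ) + 1, Nat.succ_lt_succ j.isLt⟩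

/-- Partial composition `f ∘ᵢ u` with a unary operation `u`. -/
def insUn (u : A → A) {N : ℕ} (f : (Fin N → A) → M) (i : Fin N) (v : Fin N → A) : M :=
  f (Function.update v i (u (v i)))

/-- `μ ∘₁ f`. -/
def mulL (act : M → A → M) {N : ℕ} (f : (Fin (N + 1) → A) → M) (v : Fin (N + 2) → A) : M :=
  act (f fun j => v j.castSucc) (v (Fin.last (N + 1)))

/-- `μ ∘₂ f`. -/
def mulR (act : A → M → M) {N : ℕ} (f : (Fin (N + 1) → A) → M) (v : Fin (N + 2) → A) : M :=
  act (v 0) (f fun j => v j.succ)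

section DGDer

variable [AddCommGroup B]

/-- The AsGDer differential `∂¹` of the triple `(B, hh, dd)` on `C¹ = Hom(B,B)`. -/
def d1 (mul : B → B → B) (hh dd : B → B) (f : (Fin 1 → B) → B) :
    ((Fin 2 → B) → B) × ((Fin 1 → B) → B) × ((Fin 1 → B) → B) :=
  (fun v => mul (f fun _ => v 0) (v 1) + mul (v 0) (f fun _ => v 1)
      - f fun _ => mul (v 0) (v 1),
   fun v => hh (f v) - f fun _ => hh (v 0),
   fun v => dd (f v) - f fun _ => dd (v 0))

/-- The AsGDer differential `∂ⁿ` (`n = m + 2`) of the triple `(B, hh, dd)`. -/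
def dn (mul : B → B → B) (hh dd : B → B) {m : ℕ}
    (f₁ : (Fin (m + 2) → B) → B) (f₂ f₃ : (Fin (m + 1) → B) → B) :
    ((Fin (m + 3) → B) → B) × ((Fin (m + 2) → B) → B) × ((Fin (m + 2) → B) → B) :=
  (fun v =>
      mulR mul f₁ v + (∑ i : Fin (m + 2), ((-1 : ℤ) ^ ((i : ℕ) + 1)) • insMul mul f₁ i v)
        + ((-1 : ℤ) ^ (m + 3)) • mulL mul f₁ v,
   fun v =>
      mulR mul f₂ v + ((-1 : ℤ) ^ (m + 2)) • mulL mul f₂ v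
        + (∑ i : Fin (m + 1), ((-1 : ℤ) ^ ((i : ℕ) + 1)) • insMul mul f₂ i v)
        + ((-1 : ℤ) ^ (m + 1)) • (hh (f₁ v) - ∑ i : Fin (m + 2), insUn hh f₁ i v),
   fun v =>
      mulR mul f₃ v + ((-1 : ℤ) ^ (m + 2)) • mulL mul f₃ v
        + (∑ i : Fin (m + 1), ((-1 : ℤ) ^ ((i : ℕ) + 1)) • insMul mul f₃ i v)
        + ((-1 : ℤ) ^ (m + 1)) •
            (dd (f₁ v) - insUn dd f₁ 0 v - ∑ i : Fin (m + 1), insUn hh f₁ i.succ v))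

end DGDer

section Bimodule

variable [Ring A] [AddCommGroup M] [Module A M] [Module Aᵐᵒᵖ M]

/-- The Hochschild differential of `A` with coefficients in the bimodule `M`. -/
def dHoch {m : ℕ} (f : (Fin (m + 1) → A) → M) (v : Fin (m + 2) → A) : M :=
  v 0 • f (fun j => v j.succ) +
    (∑ i : Fin (m + 1), ((-1 : ℤ) ^ ((i : ℕ) + 1)) • insMul (· * ·) f i v) +
    ((-1 : ℤ) ^ (m + 2)) •
      (MulOpposite.op (v (Fin.last (m + 1))) • f fun j => v j.castSucc)

/-- The map `Δ(f) = Σᵢ f ∘ (id ⊗ ⋯ ⊗ h ⊗ ⋯ ⊗ id) − h_M ∘ f`. -/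
def deltaMap (hh : A → A) (hM : M → M) {N : ℕ} (f : (Fin N → A) → M)
    (v : Fin N → A) : M :=
  (∑ i : Fin N, insUn hh f i v) - hM (f v)

/-- The differential of the kernel complex `K•`: the Hochschild differential with the
leading term `a₁ · f(a₂, …)` omitted. -/
def dK {m : ℕ} (f : (Fin (m + 1) → A) → M) (v : Fin (m + 2) → A) : M :=
  (∑ i : Fin (m + 1), ((-1 : ℤ) ^ ((i : ℕ) + 1)) • insMul (· * ·) f i v) +
    ((-1 : ℤ) ^ (m + 2)) •
      (MulOpposite.op (v (Fin.last (m + 1))) • f fun j => v j.castSucc)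

/-- Multiplication of the semi-direct product `A ⋉ M`. -/
def mulSd (p q : A × M) : A × M :=
  (p.1 * q.1, p.1 • q.2 + MulOpposite.op q.1 • p.2)

/-- The map `h ⊕ h_M` on `A ⋉ M`. -/
def mapSd (hh : A → A) (hM : M → M) (p : A × M) : A × M := (hh p.1, hM p.2)

/-- The identification of a cochain `A^{⊗N} → M` with a cochain of `A ⋉ M` taking
values in `M` and vanishing whenever some argument lies in `M`. -/
def liftC {N : ℕ} (f : (Fin N → A) → M) (v : Fin N → A × M) : A × M :=
  (0, f fun i => (v i).1)

/-- Restriction of a cochain of `A ⋉ M` to a cochain `A^{⊗N} → M`. -/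
def projC {N : ℕ} (F : (Fin N → A × M) → A × M) (v : Fin N → A) : M :=
  (F fun i => (v i, 0)).2

/-- Degree-1 differential of the AsGDer complex of `(A, h, δ)` with coefficients in
the AsGDer-module `(M, h_M, δ_M)`: the restriction of the AsGDer differential of the
semi-direct product triple `(A ⋉ M, h ⊕ h_M, δ ⊕ δ_M)`. -/
def dGM1 (hh dd : A → A) (hM dM : M → M) (f : (Fin 1 → A) → M) :
    ((Fin 2 → A) → M) × ((Fin 1 → A) → M) × ((Fin 1 → A) → M) :=
  (projC (d1 (B := A × M) mulSd (mapSd hh hM) (mapSd dd dM) (liftC f)).1,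
   projC (d1 (B := A × M) mulSd (mapSd hh hM) (mapSd dd dM) (liftC f)).2.1,
   projC (d1 (B := A × M) mulSd (mapSd hh hM) (mapSd dd dM) (liftC f)).2.2)

/-- Degree-`(m+2)` differential of the AsGDer complex of `(A, h, δ)` with coefficients
in `(M, h_M, δ_M)`: the restriction of the AsGDer differential of the semi-direct
product triple. -/
def dGMn (hh dd : A → A) (hM dM : M → M) {m : ℕ}
    (f₁ : (Fin (m + 2) → A) → M) (f₂ f₃ : (Fin (m + 1) → A) → M) :
    ((Fin (m + 3) → A) → M) × ((Fin (m + 2) → A) → M) × ((Fin (m + 2) → A) → M) :=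
  (projC (dn (B := A × M) mulSd (mapSd hh hM) (mapSd dd dM)
      (liftC f₁) (liftC f₂) (liftC f₃)).1,
   projC (dn (B := A × M) mulSd (mapSd hh hM) (mapSd dd dM)
      (liftC f₁) (liftC f₂) (liftC f₃)).2.1,
   projC (dn (B := A × M) mulSd (mapSd hh hM) (mapSd dd dM)
      (liftC f₁) (liftC f₂) (liftC f₃)).2.2)

/-- Degree-1 differential of the AssDer complex: `∂'(f) = (d_Hoch f, −Δ f)`. -/
def dA1 (hh : A → A) (hM : M → M) (f : (Fin 1 → A) → M) :
    ((Fin 2 → A) → M) × ((Fin 1 → A) → M) :=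
  (dHoch f, fun v => -(deltaMap hh hM f v))

/-- Degree-`(m+2)` differential of the AssDer complex:
`∂'(fₙ, f̄ₙ) = (d_Hoch fₙ, d_Hoch f̄ₙ + (−1)ⁿ Δ fₙ)`. -/
def dAn (hh : A → A) (hM : M → M) {m : ℕ}
    (f₁ : (Fin (m + 2) → A) → M) (f₂ : (Fin (m + 1) → A) → M) :
    ((Fin (m + 3) → A) → M) × ((Fin (m + 2) → A) → M) :=
  (dHoch f₁, fun v => dHoch f₂ v + ((-1 : ℤ) ^ (m + 2)) • deltaMap hh hM f₁ v)

end Bimodule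

section Aux
set_option linter.unusedSectionVars false

variable [Ring A] [AddCommGroup M] [Module A M] [Module Aᵐᵒᵖ M]
variable (hh : A → A) (hM : M → M)

lemma delta_add (hMadd : ∀ x y : M, hM (x + y) = hM x + hM y) {N : ℕ}
    (g₁ g₂ : (Fin N → A) → M) (v : Fin N → A) :
    deltaMap hh hM (fun w => g₁ w + g₂ w) v
      = deltaMap hh hM g₁ v + deltaMap hh hM g₂ v := by
  simp only [deltaMap, insUn, hMadd, Finset.sum_add_distrib]
  abel

lemma delta_zsmul (hMz : ∀ (c : ℤ) (x : M), hM (c • x) = c • hM x) {N : ℕ}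
    (c : ℤ) (g : (Fin N → A) → M) (v : Fin N → A) :
    deltaMap hh hM (fun w => c • g w) v = c • deltaMap hh hM g v := by
  simp only [deltaMap, insUn, hMz, ← Finset.smul_sum, smul_sub]

lemma delta_sum (hMadd : ∀ x y : M, hM (x + y) = hM x + hM y) (hM0 : hM 0 = 0)
    {N : ℕ} {ι : Type*} (s : Finset ι) (g : ι → (Fin N → A) → M) (v : Fin N → A) :
    deltaMap hh hM (fun w => ∑ i ∈ s, g i w) v = ∑ i ∈ s, deltaMap hh hM (g i) v := by
  classical
  induction s using Finset.cons_induction with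
  | empty => simp [deltaMap, insUn, hM0]
  | cons a s ha ih =>
      simp only [Finset.sum_cons]
      rw [delta_add hh hM hMadd (g a) (fun w => ∑ i ∈ s, g i w) v, ih]

/-- The argument vector of `insMul`. -/
def wVec {m : ℕ} (i : Fin (m + 1)) (v : Fin (m + 2) → A) : Fin (m + 1) → A := fun j =>
  if (j : ℕ) < (i : ℕ) then v ⟨j, Nat.lt_succ_of_lt j.isLt⟩
  else if (j : ℕ) = (i : ℕ) then
    v ⟨j, Nat.lt_succ_of_lt j.isLt⟩ * v ⟨(j : ℕ) + 1, Nat.succ_lt_succ j.isLt⟩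
  else v ⟨(j : ℕ) + 1, Nat.succ_lt_succ j.isLt⟩

lemma sigma_val {m : ℕ} (i j' : Fin (m + 1)) :
    (((i.castSucc).succAbove j') : ℕ)
      = if (j' : ℕ) < (i : ℕ) then (j' : ℕ) else (j' : ℕ) + 1 := by
  rcases lt_or_ge (j' : ℕ) (i : ℕ) with hlt | hge
  · rw [Fin.succAbove_of_castSucc_lt _ _
      (Fin.castSucc_lt_castSucc_iff.mpr hlt), if_pos hlt]
    rfl
  · rw [Fin.succAbove_of_le_castSucc _ _
      (Fin.castSucc_le_castSucc_iff.mpr hge), if_neg (not_lt.mpr hge)]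
    rfl

lemma wVec_update_ne {m : ℕ} (i j' : Fin (m + 1)) (hne : j' ≠ i) (v : Fin (m + 2) → A)
    (x : A) :
    wVec i (Function.update v ((i.castSucc).succAbove j') x)
      = Function.update (wVec i v) j' x := by
  have hσ := sigma_val i j'
  have hne' : (j' : ℕ) ≠ (i : ℕ) := fun hc => hne (Fin.ext hc)
  funext jj
  simp only [wVec, Function.update_apply, Fin.ext_iff, hσ]
  split_ifs <;> first | rfl | omega

lemma wVec_apply_ne {m : ℕ} (i j' : Fin (m + 1)) (hne : j' ≠ i) (v : Fin (m + 2) → A) :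
    wVec i v j' = v ((i.castSucc).succAbove j') := by
  have hσ := sigma_val i j'
  have hne' : (j' : ℕ) ≠ (i : ℕ) := fun hc => hne (Fin.ext hc)
  simp only [wVec]
  split_ifs with h1
  · exact congrArg v (Fin.ext (by rw [hσ, if_pos h1]))
  · exact congrArg v (Fin.ext (by rw [hσ, if_neg h1]))

lemma wVec_apply_self {m : ℕ} (i : Fin (m + 1)) (v : Fin (m + 2) → A) :
    wVec i v i
      = v ⟨(i : ℕ), Nat.lt_succ_of_lt i.isLt⟩
        * v ⟨(i : ℕ) + 1, Nat.succ_lt_succ i.isLt⟩ := by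
  simp [wVec]

lemma wVec_update_castSucc {m : ℕ} (i : Fin (m + 1)) (v : Fin (m + 2) → A) (x : A) :
    wVec i (Function.update v i.castSucc x)
      = Function.update (wVec i v) i (x * v ⟨(i : ℕ) + 1, Nat.succ_lt_succ i.isLt⟩) := by
  funext jj
  simp only [wVec, Function.update_apply, Fin.ext_iff, Fin.coe_castSucc]
  split_ifs <;>
    first
      | rfl
      | omega
      | (congr 1 <;> first | rfl | (congr 1 <;> simp only [Fin.mk.injEq] <;> omega))

lemma wVec_update_succ {m : ℕ} (i : Fin (m + 1)) (v : Fin (m + 2) → A) (x : A) :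
    wVec i (Function.update v i.succ x)
      = Function.update (wVec i v) i (v ⟨(i : ℕ), Nat.lt_succ_of_lt i.isLt⟩ * x) := by
  funext jj
  simp only [wVec, Function.update_apply, Fin.ext_iff, Fin.val_succ]
  split_ifs <;>
    first
      | rfl
      | omega
      | (congr 1 <;> first | rfl | (congr 1 <;> simp only [Fin.mk.injEq] <;> omega))

lemma I_comm (hder : ∀ a b : A, hh (a * b) = hh a * b + a * hh b)
    {m : ℕ} (f : (Fin (m + 1) → A) → M)
    (hf : ∀ (w : Fin (m + 1) → A) (j : Fin (m + 1)) (x y : A),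
      f (Function.update w j (x + y)) = f (Function.update w j x) + f (Function.update w j y))
    (i : Fin (m + 1)) (v : Fin (m + 2) → A) :
    deltaMap hh hM (insMul (· * ·) f i) v = insMul (· * ·) (deltaMap hh hM f) i v := by
  classical
  have key : (∑ j : Fin (m + 2), f (wVec i (Function.update v j (hh (v j)))))
      = ∑ j' : Fin (m + 1), f (Function.update (wVec i v) j' (hh (wVec i v j'))) := by
    set T : Fin (m + 2) → M := fun j => f (wVec i (Function.update v j (hh (v j)))) with hT
    set S : Fin (m + 1) → M :=
      fun j' => f (Function.update (wVec i v) j' (hh (wVec i v j'))) with hS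
    have h1 : ∑ j : Fin (m + 2), T j
        = T i.castSucc + ∑ j' : Fin (m + 1), T ((i.castSucc).succAbove j') :=
      Fin.sum_univ_succAbove T i.castSucc
    have ha : ∀ j' : Fin (m + 1), j' ≠ i → T ((i.castSucc).succAbove j') = S j' := by
      intro j' hne
      rw [hT, hS]
      simp only
      rw [wVec_update_ne i j' hne, wVec_apply_ne i j' hne]
    have hb : S i = T i.castSucc + T ((i.castSucc).succAbove i) := by
      have hσi : (i.castSucc).succAbove i = i.succ :=
        Fin.succAbove_of_le_castSucc _ _ (le_refl _)
      rw [hσi, hT, hS]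
      simp only
      rw [wVec_apply_self, hder, hf, wVec_update_castSucc, wVec_update_succ]
      congr 2
    have h2 : ∑ j' : Fin (m + 1), S j'
        = ∑ j' : Fin (m + 1),
            (T ((i.castSucc).succAbove j') + if j' = i then T i.castSucc else 0) := by
      refine Finset.sum_congr rfl ?_
      intro j' _
      by_cases hji : j' = i
      · subst hji; rw [hb, if_pos rfl, add_comm]
      · rw [ha j' hji, if_neg hji, add_zero]
    rw [h1, h2, Finset.sum_add_distrib, Finset.sum_ite_eq' Finset.univ i
      (fun _ => T i.castSucc)]
    simp [add_comm]
  show (∑ j : Fin (m + 2), f (wVec i (Function.update v j (hh (v j)))))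
        - hM (f (wVec i v))
      = (∑ j' : Fin (m + 1), f (Function.update (wVec i v) j' (hh (wVec i v j'))))
        - hM (f (wVec i v))
  rw [key]

lemma L_comm (hM1 : ∀ (a : A) (x : M), hM (a • x) = hh a • x + a • hM x)
    {m : ℕ} (f : (Fin (m + 1) → A) → M) (v : Fin (m + 2) → A) :
    deltaMap hh hM (fun w => w 0 • f fun j => w j.succ) v
      = v 0 • deltaMap hh hM f (fun j => v j.succ) := by
  have hvec : ∀ (j : Fin (m + 1)) (x : A),
      (fun jj : Fin (m + 1) => Function.update v j.succ x jj.succ)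
        = Function.update (fun jj => v jj.succ) j x := by
    intro j x; funext jj
    simp [Function.update_apply, Fin.succ_inj]
  have h0 : ∀ x : A, (fun jj : Fin (m + 1) => Function.update v 0 x jj.succ)
      = fun jj => v jj.succ := by
    intro x; funext jj; exact Function.update_of_ne (Fin.succ_ne_zero jj) x v
  have h0' : ∀ (j : Fin (m + 1)) (x : A), Function.update v j.succ x 0 = v 0 := by
    intro j x; exact Function.update_of_ne (Fin.succ_ne_zero j).symm x v
  simp only [deltaMap, insUn, Fin.sum_univ_succ, Function.update_self, h0, h0', hvec,
    hM1, smul_sub, smul_add, Finset.smul_sum]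
  abel

lemma R_comm
    (hM2 : ∀ (a : A) (x : M),
      hM (MulOpposite.op a • x) = MulOpposite.op a • hM x + MulOpposite.op (hh a) • x)
    {m : ℕ} (f : (Fin (m + 1) → A) → M) (v : Fin (m + 2) → A) :
    deltaMap hh hM (fun w => MulOpposite.op (w (Fin.last (m + 1))) • f fun j => w j.castSucc) v
      = MulOpposite.op (v (Fin.last (m + 1))) • deltaMap hh hM f (fun j => v j.castSucc) := by
  have hvec : ∀ (j : Fin (m + 1)) (x : A),
      (fun jj : Fin (m + 1) => Function.update v j.castSucc x jj.castSucc)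
        = Function.update (fun jj => v jj.castSucc) j x := by
    intro j x; funext jj
    simp [Function.update_apply, Fin.castSucc_inj]
  have h0 : ∀ x : A, (fun jj : Fin (m + 1) => Function.update v (Fin.last (m + 1)) x jj.castSucc)
      = fun jj => v jj.castSucc := by
    intro x; funext jj; exact Function.update_of_ne (Fin.castSucc_lt_last jj).ne x v
  have h0' : ∀ (j : Fin (m + 1)) (x : A),
      Function.update v j.castSucc x (Fin.last (m + 1)) = v (Fin.last (m + 1)) := by
    intro j x; exact Function.update_of_ne (Fin.castSucc_lt_last j).ne' x v
  simp only [deltaMap, insUn, Fin.sum_univ_castSucc, Function.update_self, h0, h0', hvec,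
    hM2, smul_sub, smul_add, Finset.smul_sum]
  abel

end Aux

/-- A plain cochain is (the coercion of) a `k`-multilinear map. -/
def IsML (k : Type*) [Field k] {A M : Type*} [Ring A] [Algebra k A]
    [AddCommGroup M] [Module k M] {N : ℕ} (f : (Fin N → A) → M) : Prop :=
  ∃ F : MultilinearMap k (fun _ : Fin N => A) M, ⇑F = f

/-- Let `(A, h)` be an AssDer pair and `(M, h_M)` a module over
it.  The map `Δ(f) = Σᵢ f∘(id^{⊗(i−1)} ⊗ h ⊗ id^{⊗(n−i)}) − h_M ∘ f` is a chain map
on the Hochschild cochain complex of `A` with coefficients in `M`: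
`d_Hoch ∘ Δ = Δ ∘ d_Hoch`. -/
theorem delta_is_chain_map
    {k A M : Type*} [Field k] [CharZero k] [Ring A] [Algebra k A]
    [AddCommGroup M] [Module k M] [Module A M] [Module Aᵐᵒᵖ M]
    [SMulCommClass A Aᵐᵒᵖ M] [IsScalarTower k A M] [IsScalarTower k Aᵐᵒᵖ M]
    (h : A →ₗ[k] A) (hM : M →ₗ[k] M)
    (hder : ∀ a b : A, h (a * b) = h a * b + a * h b)
    (hM1 : ∀ (a : A) (m : M), hM (a • m) = h a • m + a • hM m)
    (hM2 : ∀ (a : A) (m : M),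
      hM (MulOpposite.op a • m) = MulOpposite.op a • hM m + MulOpposite.op (h a) • m) :
    ∀ (m : ℕ) (f : MultilinearMap k (fun _ : Fin (m + 1) => A) M),
      dHoch (deltaMap ⇑h ⇑hM ⇑f) = deltaMap ⇑h ⇑hM (dHoch ⇑f) := by
  intro m F
  have hMadd : ∀ x y : M, hM (x + y) = hM x + hM y := fun x y => hM.map_add x y
  have hM0 : hM (0 : M) = 0 := hM.map_zero
  have hMz : ∀ (c : ℤ) (x : M), hM (c • x) = c • hM x := fun c x => map_zsmul hM c x
  have hf : ∀ (w : Fin (m + 1) → A) (j : Fin (m + 1)) (x y : A),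
      F (Function.update w j (x + y))
        = F (Function.update w j x) + F (Function.update w j y) :=
    fun w j x y => F.map_update_add w j x y
  funext v
  have step1 : deltaMap ⇑h ⇑hM (dHoch ⇑F) v
      = deltaMap ⇑h ⇑hM (fun w => w 0 • F fun j => w j.succ) v
        + deltaMap ⇑h ⇑hM
            (fun w => ∑ i : Fin (m + 1),
              ((-1 : ℤ) ^ ((i : ℕ) + 1)) • insMul (· * ·) ⇑F i w) v
        + deltaMap ⇑h ⇑hM
            (fun w => ((-1 : ℤ) ^ (m + 2)) •
              (MulOpposite.op (w (Fin.last (m + 1))) • F fun j => w j.castSucc)) v := by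
    rw [← delta_add ⇑h ⇑hM hMadd, ← delta_add ⇑h ⇑hM hMadd]
    rfl
  have step2 : deltaMap ⇑h ⇑hM
      (fun w => ∑ i : Fin (m + 1), ((-1 : ℤ) ^ ((i : ℕ) + 1)) • insMul (· * ·) ⇑F i w) v
      = ∑ i : Fin (m + 1),
          ((-1 : ℤ) ^ ((i : ℕ) + 1)) • insMul (· * ·) (deltaMap ⇑h ⇑hM ⇑F) i v := by
    rw [delta_sum ⇑h ⇑hM hMadd hM0 Finset.univ
      (fun (i : Fin (m + 1)) (w : Fin (m + 2) → A) =>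
        ((-1 : ℤ) ^ ((i : ℕ) + 1)) • insMul (· * ·) ⇑F i w) v]
    refine Finset.sum_congr rfl fun i _ => ?_
    rw [delta_zsmul ⇑h ⇑hM hMz, I_comm ⇑h ⇑hM hder ⇑F hf i v]
  rw [step1, step2, L_comm ⇑h ⇑hM hM1 ⇑F v, delta_zsmul ⇑h ⇑hM hMz,
    R_comm ⇑h ⇑hM hM2 ⇑F v]
  rfl

end Stmt10
end
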